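/- Let f : D → 𝓡, where 𝓡 carries a metric d, and let {R₀ˣ : x ∈ D} be an initial family with ∪_{x∈D} R₀ˣ = 𝓡, generating the basic set sequence with layer function L. Fix x₀, y₀ ∈ D, set r₀ := f(y₀), and assume f(x₀) ≠ r₀ and r₀ ∉ R₀^{x₀}. Let L̄ be the layer function of the basic set sequence generated by the modified initial family R̄₀^{x₀} := R₀^{x₀} ∪ {r₀}, R̄₀ˣ := R₀ˣ for x ≠ x₀. Fix x ∈ D, write d₀ := d(f(x), r₀) and k₀ := Lˣ(r₀), and suppose N := Σ_{r∈𝓡} exp(−Lˣ(r)·ε)·d(f(x),r) and W := Σ_{r∈𝓡} exp(−Lˣ(r)·ε) are finite with W − exp(−k₀·ε) > 0. Define the expected distortions E := N/W and Ē := (Σ_{r∈𝓡} exp(−L̄ˣ(r)·ε)·d(f(x),r))/(Σ_{r∈𝓡} exp(−L̄ˣ(r)·ε)). If (N − exp(−k₀·ε)·d₀)/(W − exp(−k₀·ε)) ≤ d₀, then E ≤ Ē; otherwise, E ≥ Ē. -/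

import Mathlib

/-!
A point lies in the `i`-th basic set around `x` exactly when `i` is the first index at which it
is a candidate, i.e. lies in `R0 x` (for `i = 0`) or in some `R0 y` with `i - 1 < d̄(x, y) ≤ i`.
Adding `r₀` to one initial set only enlarges the candidate sets, and only by `r₀`; hence the
layer of `r₀` can only decrease and every other layer is unchanged. So the new expected
distortion is the old weighted mean with the weight of `r₀` raised from `a` to `b ≥ a`, and
`t ↦ (M + t d₀) / (V + t)` is monotone or antitone according as the mean `M / V` of the other
points lies below or above `d₀`.
-/

/-- The basic set sequence generated by an initial family `R0 : D → Set 𝓡`: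
`R_0^x = R0 x` and, for `i ≥ 1`,
`R_i^x = (∪_{y : i−1 < d̄(x,y) ≤ i} R0 y) \ A_{i−1}^x` where `A_j^x = ∪_{k ≤ j} R_k^x`. -/
def basicSeq {D 𝓡 : Type*} [PseudoMetricSpace D] (R0 : D → Set 𝓡) (x : D) : ℕ → Set 𝓡
  | 0 => R0 x
  | i + 1 =>
      (⋃ y ∈ {y : D | (i : ℝ) < dist x y ∧ dist x y ≤ (i : ℝ) + 1}, R0 y) \
        ⋃ k ≤ i, basicSeq R0 x k

open Set Function

section BasicSeq

variable {D 𝓡 : Type*} [PseudoMetricSpace D]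

/-- The `i`-th basic set before the earlier layers are removed. -/
def basicSeqCandidates (R0 : D → Set 𝓡) (x : D) : ℕ → Set 𝓡
  | 0 => R0 x
  | i + 1 => ⋃ y ∈ {y : D | (i : ℝ) < dist x y ∧ dist x y ≤ (i : ℝ) + 1}, R0 y

theorem biUnion_basicSeq_eq (R0 : D → Set 𝓡) (x : D) (j : ℕ) :
    ⋃ k ≤ j, basicSeq R0 x k = ⋃ k ≤ j, basicSeqCandidates R0 x k := by
  induction j with
  | zero => simp [basicSeq, basicSeqCandidates]
  | succ n ih =>
    rw [biUnion_le_succ, biUnion_le_succ, ih, basicSeq, ih, union_sdiff_self]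
    rfl

theorem mem_basicSeq_iff {R0 : D → Set 𝓡} {x : D} {i : ℕ} {r : 𝓡} :
    r ∈ basicSeq R0 x i ↔
      r ∈ basicSeqCandidates R0 x i ∧ ∀ k < i, r ∉ basicSeqCandidates R0 x k := by
  cases i with
  | zero => simp [basicSeq, basicSeqCandidates]
  | succ n =>
    simp only [basicSeq, basicSeqCandidates, mem_sdiff, biUnion_basicSeq_eq, mem_iUnion₂,
      Nat.lt_succ_iff, not_exists]

theorem mem_basicSeqCandidates_of_forall_mem {R0 R1 : D → Set 𝓡} {r : 𝓡}
    (h : ∀ y, r ∈ R0 y → r ∈ R1 y) {x : D} {i : ℕ} (hr : r ∈ basicSeqCandidates R0 x i) :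
    r ∈ basicSeqCandidates R1 x i := by
  cases i with
  | zero => exact h x hr
  | succ n =>
    obtain ⟨y, hy, hry⟩ := mem_iUnion₂.mp hr
    exact mem_iUnion₂.mpr ⟨y, hy, h y hry⟩

theorem le_of_mem_basicSeq_of_forall_mem {R0 R1 : D → Set 𝓡} {r : 𝓡}
    (h : ∀ y, r ∈ R0 y → r ∈ R1 y) {x : D} {i j : ℕ}
    (hi : r ∈ basicSeq R0 x i) (hj : r ∈ basicSeq R1 x j) : j ≤ i := by
  by_contra! hij
  exact (mem_basicSeq_iff.mp hj).2 i hij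
    (mem_basicSeqCandidates_of_forall_mem h (mem_basicSeq_iff.mp hi).1)

theorem le_and_eq_of_mem_basicSeq_insert {R0 R0' : D → Set 𝓡} {r₀ : 𝓡}
    (hR0' : ∀ y, R0' y = R0 y ∨ R0' y = insert r₀ (R0 y)) {x : D} {r : 𝓡} {i j : ℕ}
    (hi : r ∈ basicSeq R0 x i) (hj : r ∈ basicSeq R0' x j) : j ≤ i ∧ (r ≠ r₀ → j = i) := by
  have hle : j ≤ i := le_of_mem_basicSeq_of_forall_mem
    (fun y hr => by rcases hR0' y with h | h <;> simp [h, hr]) hi hj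
  refine ⟨hle, fun hr₀ => hle.antisymm (le_of_mem_basicSeq_of_forall_mem (fun y hr => ?_) hj hi)⟩
  rcases hR0' y with h | h <;> simp_all

end BasicSeq

theorem HasSum.of_forall_ne_eq {α β : Type*} [AddCommGroup α] [TopologicalSpace α]
    [IsTopologicalAddGroup α] {f g : β → α} {a : α} {b₀ : β} (hf : HasSum f a)
    (h : ∀ b ≠ b₀, g b = f b) : HasSum g (a - f b₀ + g b₀) := by
  classical
  convert hf.update b₀ (g b₀) using 1
  · exact eq_update_iff.mpr ⟨rfl, h⟩
  · abel

section WeightedMean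

variable {M V d : ℝ}

theorem monotoneOn_weightedMean (hV : 0 < V) (h : M ≤ d * V) :
    MonotoneOn (fun t => (M + t * d) / (V + t)) (Ici 0) := by
  intro s (hs : 0 ≤ s) t (ht : 0 ≤ t) hst
  rw [div_le_div_iff₀ (by positivity) (by positivity)]
  nlinarith [mul_le_mul_of_nonneg_left h (sub_nonneg.mpr hst)]

theorem antitoneOn_weightedMean (hV : 0 < V) (h : d * V ≤ M) :
    AntitoneOn (fun t => (M + t * d) / (V + t)) (Ici 0) := by
  intro s (hs : 0 ≤ s) t (ht : 0 ≤ t) hst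
  rw [div_le_div_iff₀ (by positivity) (by positivity)]
  nlinarith [mul_le_mul_of_nonneg_left h (sub_nonneg.mpr hst)]

end WeightedMean

theorem stmt_16_general {D 𝓡 : Type*} [MetricSpace D] [MetricSpace 𝓡]
    (f : D → 𝓡) (ε : ℝ) (hε : 0 < ε)
    (R0 : D → Set 𝓡)
    (L : D → 𝓡 → ℕ)
    (hL : ∀ (x : D) (r : 𝓡), r ∈ basicSeq R0 x (L x r))
    (x₀ y₀ : D)
    (R0' : D → Set 𝓡)
    (hR0'x₀ : R0' x₀ = R0 x₀ ∪ {f y₀})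
    (hR0' : ∀ x : D, x ≠ x₀ → R0' x = R0 x)
    (L' : D → 𝓡 → ℕ)
    (hL' : ∀ (x : D) (r : 𝓡), r ∈ basicSeq R0' x (L' x r))
    (x : D) (N W : ℝ)
    (hN : HasSum (fun r : 𝓡 => Real.exp (-(L x r : ℝ) * ε) * dist (f x) r) N)
    (hW : HasSum (fun r : 𝓡 => Real.exp (-(L x r : ℝ) * ε)) W)
    (hWpos : 0 < W - Real.exp (-(L x (f y₀) : ℝ) * ε)) :
    ((N - Real.exp (-(L x (f y₀) : ℝ) * ε) * dist (f x) (f y₀)) /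
        (W - Real.exp (-(L x (f y₀) : ℝ) * ε)) ≤ dist (f x) (f y₀) →
      N / W ≤ (∑' r : 𝓡, Real.exp (-(L' x r : ℝ) * ε) * dist (f x) r) /
        (∑' r : 𝓡, Real.exp (-(L' x r : ℝ) * ε))) ∧
    (dist (f x) (f y₀) <
        (N - Real.exp (-(L x (f y₀) : ℝ) * ε) * dist (f x) (f y₀)) /
          (W - Real.exp (-(L x (f y₀) : ℝ) * ε)) →
      (∑' r : 𝓡, Real.exp (-(L' x r : ℝ) * ε) * dist (f x) r) /
        (∑' r : 𝓡, Real.exp (-(L' x r : ℝ) * ε)) ≤ N / W) := by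
  set r₀ := f y₀
  have hR0_cases : ∀ y, R0' y = R0 y ∨ R0' y = insert r₀ (R0 y) := fun y => by
    by_cases hy : y = x₀
    · exact Or.inr (hy ▸ hR0'x₀.trans union_singleton)
    · exact Or.inl (hR0' y hy)
  have hlayer := fun r => le_and_eq_of_mem_basicSeq_insert hR0_cases (hL x r) (hL' x r)
  set a := Real.exp (-(L x r₀ : ℝ) * ε)
  set b := Real.exp (-(L' x r₀ : ℝ) * ε)
  set d₀ := dist (f x) r₀
  have hab : a ≤ b := Real.exp_le_exp.mpr (by gcongr; exact (hlayer r₀).1)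
  have hN' : HasSum (fun r => Real.exp (-(L' x r : ℝ) * ε) * dist (f x) r) (N - a * d₀ + b * d₀) :=
    hN.of_forall_ne_eq fun r hr => by rw [(hlayer r).2 hr]
  have hW' : HasSum (fun r => Real.exp (-(L' x r : ℝ) * ε)) (W - a + b) :=
    hW.of_forall_ne_eq fun r hr => by rw [(hlayer r).2 hr]
  have ha : a ∈ Ici 0 := (Real.exp_pos _).le
  have hb : b ∈ Ici 0 := (Real.exp_pos _).le
  rw [hN'.tsum_eq, hW'.tsum_eq]
  refine ⟨fun h => ?_, fun h => ?_⟩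
  · simpa using monotoneOn_weightedMean hWpos ((div_le_iff₀ hWpos).mp h) ha hb hab
  · simpa using antitoneOn_weightedMean hWpos ((lt_div_iff₀ hWpos).mp h).le ha hb hab

/-- Utility change when one point `r₀ = f y₀` is migrated into the initial layer
of one dataset `x₀`: writing `N = Σ_r exp(-Lˣ(r)ε)·d(f x, r)`,
`W = Σ_r exp(-Lˣ(r)ε)`, `d₀ = d(f x, r₀)` and `k₀ = Lˣ(r₀)`, if
`(N − exp(−k₀ε)·d₀)/(W − exp(−k₀ε)) ≤ d₀` then the expected distortion does not
decrease (`E ≤ Ē`), and otherwise it does not increase (`E ≥ Ē`). -/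
theorem stmt_16 {D 𝓡 : Type*} [MetricSpace D] [MetricSpace 𝓡] [Countable 𝓡]
    (f : D → 𝓡) (ε : ℝ) (hε : 0 < ε)
    (R0 : D → Set 𝓡) (hcover : (⋃ x : D, R0 x) = Set.univ)
    (L : D → 𝓡 → ℕ)
    (hL : ∀ (x : D) (r : 𝓡), r ∈ basicSeq R0 x (L x r))
    (x₀ y₀ : D) (hne : f x₀ ≠ f y₀) (hr₀ : f y₀ ∉ R0 x₀)
    (R0' : D → Set 𝓡)
    (hR0'x₀ : R0' x₀ = R0 x₀ ∪ {f y₀})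
    (hR0' : ∀ x : D, x ≠ x₀ → R0' x = R0 x)
    (L' : D → 𝓡 → ℕ)
    (hL' : ∀ (x : D) (r : 𝓡), r ∈ basicSeq R0' x (L' x r))
    (x : D) (N W : ℝ)
    (hN : HasSum (fun r : 𝓡 => Real.exp (-(L x r : ℝ) * ε) * dist (f x) r) N)
    (hW : HasSum (fun r : 𝓡 => Real.exp (-(L x r : ℝ) * ε)) W)
    (hWpos : 0 < W - Real.exp (-(L x (f y₀) : ℝ) * ε)) :
    ((N - Real.exp (-(L x (f y₀) : ℝ) * ε) * dist (f x) (f y₀)) /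
        (W - Real.exp (-(L x (f y₀) : ℝ) * ε)) ≤ dist (f x) (f y₀) →
      N / W ≤ (∑' r : 𝓡, Real.exp (-(L' x r : ℝ) * ε) * dist (f x) r) /
        (∑' r : 𝓡, Real.exp (-(L' x r : ℝ) * ε))) ∧
    (dist (f x) (f y₀) <
        (N - Real.exp (-(L x (f y₀) : ℝ) * ε) * dist (f x) (f y₀)) /
          (W - Real.exp (-(L x (f y₀) : ℝ) * ε)) →
      (∑' r : 𝓡, Real.exp (-(L' x r : ℝ) * ε) * dist (f x) r) /
        (∑' r : 𝓡, Real.exp (-(L' x r : ℝ) * ε)) ≤ N / W) :=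
  stmt_16_general f ε hε R0 L hL x₀ y₀ R0' hR0'x₀ hR0' L' hL' x N W hN hW hWpos
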